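/- arXiv:2410.22186 — 2 statements merged into one kernel-verified Lean document; each statement's English description precedes it below -/
import Mathlib

section
/- Let (Ω, F, μ) be a probability space with a filtration F_0 ⊆ F_1 ⊆ … ⊆ F_T ⊆ F. For each t ∈ {1,…,T}, let B_t : Ω → {0,1} be an F_t-measurable random variable and let H_t ∈ F_{t−1} be an event, and let p ∈ [0,1]. Suppose that for each t, almost everywhere on H_t the conditional expectation satisfies E[B_t | F_{t−1}] ≥ p. Then E[ exp(−∑_{t=1}^T B_t) · ∏_{t=1}^T 1_{H_t} ] ≤ exp(−(1 − e^{−1})·p·T). -/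
/-!
Since each `B t` takes values in `{0, 1}`, `exp (-B t) = 1 - c * B t` with `c = 1 - e⁻¹`, so the
integrand is the product of the factors `f t = 1_{H t} * (1 - c * B t)`, each `F t`-measurable and
with values in `[0, 1]`. On `H t` the conditional expectation of `f t` given `F (t - 1)` is
`1 - c * E[B t | F (t - 1)] ≤ 1 - c * p ≤ exp (-c * p)`, and off `H t` it vanishes. Conditioning
on `F (t - 1)` and peeling off the last factor one at a time gives the bound `exp (-c * p) ^ T`.
-/

open MeasureTheory Finset

namespace MeasureTheory

variable {Ω : Type*} {m m0 : MeasurableSpace Ω} {μ : Measure Ω}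

theorem condExp_const_sub_mul_ae_eq [IsFiniteMeasure μ] (hm : m ≤ m0) (a c : ℝ) {X : Ω → ℝ}
    (hX : Integrable X μ) :
    μ[fun ω => a - c * X ω | m] =ᵐ[μ] fun ω => a - c * μ[X | m] ω := by
  have hsub := condExp_sub (integrable_const a) (hX.smul c) m
  filter_upwards [hsub, condExp_smul (μ := μ) c X m] with ω h_sub h_smul
  rw [condExp_const hm a] at h_sub
  rw [Pi.smul_apply, smul_eq_mul] at h_smul
  rw [← h_smul]
  exact h_sub

theorem condExp_indicator_one_sub_mul_le_exp [IsFiniteMeasure μ] (hm : m ≤ m0) {s : Set Ω}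
    {X : Ω → ℝ} {c p : ℝ} (hc : 0 ≤ c) (hs : MeasurableSet[m] s) (hX : Integrable X μ)
    (hXp : ∀ᵐ ω ∂μ, ω ∈ s → p ≤ μ[X | m] ω) :
    μ[s.indicator (fun ω => 1 - c * X ω) | m] ≤ᵐ[μ] fun _ => Real.exp (-(c * p)) := by
  have hind := condExp_indicator (f := fun ω => 1 - c * X ω)
    ((integrable_const (1 : ℝ)).sub (hX.const_mul c)) hs
  filter_upwards [hind, condExp_const_sub_mul_ae_eq hm 1 c hX, hXp] with ω h_ind h_aff h_p
  rw [h_ind]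
  by_cases hω : ω ∈ s
  · rw [Set.indicator_of_mem hω, h_aff]
    calc 1 - c * μ[X | m] ω ≤ -(c * p) + 1 := by nlinarith [h_p hω]
      _ ≤ Real.exp (-(c * p)) := Real.add_one_le_exp _
  · rw [Set.indicator_of_notMem hω]
    exact (Real.exp_pos _).le

theorem integral_mul_le_of_condExp_le [IsFiniteMeasure μ] (hm : m ≤ m0) {f g : Ω → ℝ}
    {q C : ℝ} (hg : StronglyMeasurable[m] g) (hg0 : 0 ≤ g) (hgC : ∀ ω, g ω ≤ C)
    (hf : Integrable f μ) (hfq : μ[f | m] ≤ᵐ[μ] fun _ => q) :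
    ∫ ω, g ω * f ω ∂μ ≤ q * ∫ ω, g ω ∂μ := by
  have hg_norm : ∀ᵐ ω ∂μ, ‖g ω‖ ≤ C :=
    ae_of_all _ fun ω => (Real.norm_of_nonneg (hg0 ω)).trans_le (hgC ω)
  have hg_meas : AEStronglyMeasurable g μ := (hg.mono hm).aestronglyMeasurable
  calc ∫ ω, g ω * f ω ∂μ = ∫ ω, μ[g * f | m] ω ∂μ := (integral_condExp hm).symm
    _ = ∫ ω, g ω * μ[f | m] ω ∂μ :=
      integral_congr_ae (condExp_mul_of_stronglyMeasurable_left hg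
        (hf.bdd_mul hg_meas hg_norm) hf)
    _ ≤ ∫ ω, g ω * q ∂μ := by
      refine integral_mono_ae (integrable_condExp.bdd_mul hg_meas hg_norm)
        ((Integrable.of_bound hg_meas C hg_norm).mul_const q) ?_
      filter_upwards [hfq] with ω hω
      exact mul_le_mul_of_nonneg_left hω (hg0 ω)
    _ = q * ∫ ω, g ω ∂μ := by rw [integral_mul_const, mul_comm]

theorem integral_prod_le_pow_of_condExp_le [IsProbabilityMeasure μ] (F : Filtration ℕ m0)
    {f : ℕ → Ω → ℝ} {q : ℝ} (hq : 0 ≤ q) (n : ℕ)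
    (hf : ∀ t ∈ Icc 1 n, StronglyMeasurable[F t] (f t))
    (hf0 : ∀ t ∈ Icc 1 n, 0 ≤ f t) (hf1 : ∀ t ∈ Icc 1 n, ∀ ω, f t ω ≤ 1)
    (hfq : ∀ t ∈ Icc 1 n, μ[f t | F (t - 1)] ≤ᵐ[μ] fun _ => q) :
    ∫ ω, ∏ t ∈ Icc 1 n, f t ω ∂μ ≤ q ^ n := by
  induction n with
  | zero => simp
  | succ n ih =>
    have hmono : Icc 1 n ⊆ Icc 1 (n + 1) := Icc_subset_Icc_right n.le_succ
    have hlast : n + 1 ∈ Icc 1 (n + 1) := right_mem_Icc.mpr n.succ_pos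
    have hprod_meas : StronglyMeasurable[F n] fun ω => ∏ t ∈ Icc 1 n, f t ω :=
      Finset.stronglyMeasurable_fun_prod _ fun t ht =>
        (hf t (hmono ht)).mono (F.mono (mem_Icc.mp ht).2)
    have hlast_int : Integrable (f (n + 1)) μ :=
      Integrable.of_bound ((hf _ hlast).mono (F.le _)).aestronglyMeasurable 1
        (ae_of_all _ fun ω => by
          rw [Real.norm_of_nonneg (hf0 _ hlast ω)]; exact hf1 _ hlast ω)
    calc ∫ ω, ∏ t ∈ Icc 1 (n + 1), f t ω ∂μ
        = ∫ ω, (∏ t ∈ Icc 1 n, f t ω) * f (n + 1) ω ∂μ := by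
          simp_rw [prod_Icc_succ_top n.succ_pos]
      _ ≤ q * ∫ ω, ∏ t ∈ Icc 1 n, f t ω ∂μ :=
          integral_mul_le_of_condExp_le (F.le n) hprod_meas
            (fun ω => prod_nonneg fun t ht => hf0 t (hmono ht) ω)
            (fun ω => prod_le_one (fun t ht => hf0 t (hmono ht) ω)
              fun t ht => hf1 t (hmono ht) ω)
            hlast_int (by simpa using hfq _ hlast)
      _ ≤ q ^ (n + 1) := by
          rw [pow_succ']
          exact mul_le_mul_of_nonneg_left
            (ih (fun t ht => hf t (hmono ht)) (fun t ht => hf0 t (hmono ht))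
              (fun t ht => hf1 t (hmono ht)) fun t ht => hfq t (hmono ht)) hq

end MeasureTheory

theorem Real.exp_neg_eq_one_sub_mul {b : ℝ} (hb : b = 0 ∨ b = 1) :
    Real.exp (-b) = 1 - (1 - Real.exp (-1)) * b := by
  rcases hb with rfl | rfl <;> simp

theorem Real.exp_neg_sum_mul_prod_indicator {ι Ω : Type*} (s : Finset ι) (b : ι → Ω → ℝ)
    (H : ι → Set Ω) (ω : Ω) (hb : ∀ i ∈ s, b i ω = 0 ∨ b i ω = 1) :
    Real.exp (-(∑ i ∈ s, b i ω)) * ∏ i ∈ s, (H i).indicator (fun _ => (1 : ℝ)) ω =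
      ∏ i ∈ s, (H i).indicator (fun ω => 1 - (1 - Real.exp (-1)) * b i ω) ω := by
  rw [← sum_neg_distrib, Real.exp_sum, ← prod_mul_distrib]
  refine prod_congr rfl fun i hi => ?_
  rw [Real.exp_neg_eq_one_sub_mul (hb i hi)]
  by_cases hω : ω ∈ H i <;> simp [hω]

theorem exp_sum_indicator_bound_general
    {Ω : Type*} {m0 : MeasurableSpace Ω} (μ : Measure Ω) [IsProbabilityMeasure μ]
    (F : Filtration ℕ m0) (T : ℕ)
    (B : ℕ → Ω → ℝ) (H : ℕ → Set Ω) (p : ℝ)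
    (hBmeas : ∀ t ∈ Finset.Icc 1 T, Measurable[F t] (B t))
    (hBer : ∀ t ∈ Finset.Icc 1 T, ∀ ω, B t ω = 0 ∨ B t ω = 1)
    (hH : ∀ t ∈ Finset.Icc 1 T, MeasurableSet[F (t - 1)] (H t))
    (hcond : ∀ t ∈ Finset.Icc 1 T, ∀ᵐ ω ∂μ, ω ∈ H t → p ≤ (μ[B t | F (t - 1)]) ω) :
    ∫ ω, Real.exp (-(∑ t ∈ Finset.Icc 1 T, B t ω)) *
        ∏ t ∈ Finset.Icc 1 T, (H t).indicator (fun _ => (1 : ℝ)) ω ∂μ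
      ≤ Real.exp (-(1 - Real.exp (-1)) * p * T) := by
  set c : ℝ := 1 - Real.exp (-1)
  have hc0 : 0 ≤ c := sub_nonneg.mpr (Real.exp_le_one_iff.mpr (by norm_num))
  have hfactor : ∀ t ∈ Icc 1 T, ∀ ω, 1 - c * B t ω = Real.exp (-B t ω) := fun t ht ω =>
    (Real.exp_neg_eq_one_sub_mul (hBer t ht ω)).symm
  have hB_int : ∀ t ∈ Icc 1 T, Integrable (B t) μ := fun t ht =>
    Integrable.of_bound ((hBmeas t ht).mono (F.le t) le_rfl).aestronglyMeasurable 1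
      (ae_of_all _ fun ω => by rcases hBer t ht ω with h | h <;> simp [h])
  calc _ = ∫ ω, ∏ t ∈ Icc 1 T, (H t).indicator (fun ω => 1 - c * B t ω) ω ∂μ :=
        integral_congr_ae (ae_of_all _ fun ω =>
          Real.exp_neg_sum_mul_prod_indicator _ B H ω fun t ht => hBer t ht ω)
    _ ≤ Real.exp (-(c * p)) ^ T := by
        refine integral_prod_le_pow_of_condExp_le F (Real.exp_pos _).le T
          (fun t ht => ?_) (fun t ht ω => ?_) (fun t ht ω => ?_) fun t ht =>
            condExp_indicator_one_sub_mul_le_exp (F.le _) hc0 (hH t ht) (hB_int t ht)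
              (hcond t ht)
        · exact ((measurable_const.sub ((hBmeas t ht).const_mul c)).indicator
            (F.mono (Nat.sub_le t 1) _ (hH t ht))).stronglyMeasurable
        · exact Set.indicator_nonneg (fun ω _ => (hfactor t ht ω ▸ Real.exp_pos _).le) ω
        · refine Set.indicator_apply_le' (fun _ => ?_) fun _ => zero_le_one
          rw [hfactor t ht ω, Real.exp_le_one_iff, neg_nonpos]
          rcases hBer t ht ω with h | h <;> simp [h]
    _ = _ := by rw [← Real.exp_nat_mul]; ring_nf

/-- Let (Ω, F, μ) be a probability space with a filtration (F_t). For t ∈ {1,…,T},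
let B_t be an F_t-measurable {0,1}-valued random variable and H_t ∈ F_{t−1} an event,
and let p ∈ [0,1]. If for each t, almost everywhere on H_t we have E[B_t | F_{t−1}] ≥ p,
then E[exp(−∑_{t=1}^T B_t)·∏_{t=1}^T 1_{H_t}] ≤ exp(−(1 − e⁻¹)·p·T). -/
theorem exp_sum_indicator_bound
    {Ω : Type*} {m0 : MeasurableSpace Ω} (μ : Measure Ω) [IsProbabilityMeasure μ]
    (F : Filtration ℕ m0) (T : ℕ)
    (B : ℕ → Ω → ℝ) (H : ℕ → Set Ω) (p : ℝ) (hp0 : 0 ≤ p) (hp1 : p ≤ 1)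
    (hBmeas : ∀ t ∈ Finset.Icc 1 T, Measurable[F t] (B t))
    (hBer : ∀ t ∈ Finset.Icc 1 T, ∀ ω, B t ω = 0 ∨ B t ω = 1)
    (hH : ∀ t ∈ Finset.Icc 1 T, MeasurableSet[F (t - 1)] (H t))
    (hcond : ∀ t ∈ Finset.Icc 1 T, ∀ᵐ ω ∂μ, ω ∈ H t → p ≤ (μ[B t | F (t - 1)]) ω) :
    ∫ ω, Real.exp (-(∑ t ∈ Finset.Icc 1 T, B t ω)) *
        ∏ t ∈ Finset.Icc 1 T, (H t).indicator (fun _ => (1 : ℝ)) ω ∂μ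
      ≤ Real.exp (-(1 - Real.exp (-1)) * p * T) :=
  exp_sum_indicator_bound_general μ F T B H p hBmeas hBer hH hcond
end

section
/- Let G be a simple graph on a vertex set V, let s_0, s_1 ∈ V with s_0 and s_1 in the same connected component (G.Reachable s_0 s_1), and let d, d̄ be natural numbers. Suppose that for every vertex v reachable from s_0 with graph distance dist(s_0, v) ≤ d, one has dist(s_1, v) > d̄. Then dist(s_0, s_1) ≥ d + d̄ + 1. -/
private lemma walk_split_aux {V : Type*} {G : SimpleGraph V} :
    ∀ {a b : V} (p : G.Walk a b) (k : ℕ), k ≤ p.length →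
      ∃ v : V, G.Reachable a v ∧ G.dist a v ≤ k ∧ G.dist v b ≤ p.length - k := by
  intro a b p
  induction p with
  | nil =>
    intro k hk
    exact ⟨_, .refl _, by simp [SimpleGraph.dist_self], by simp [SimpleGraph.dist_self]⟩
  | @cons x y z hadj q ih =>
    intro k hk
    cases k with
    | zero =>
      exact ⟨x, .refl _, by simp, by simpa using SimpleGraph.dist_le (SimpleGraph.Walk.cons hadj q)⟩
    | succ k' =>
      obtain ⟨v, hrv, h1, h2⟩ := ih k' (by simpa [SimpleGraph.Walk.length_cons] using hk)
      refine ⟨v, (hadj.reachable).trans hrv, ?_, ?_⟩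
      · obtain ⟨w, hw⟩ := hrv.exists_walk_length_eq_dist
        have := G.dist_le (SimpleGraph.Walk.cons hadj w)
        simp only [SimpleGraph.Walk.length_cons, hw] at this
        omega
      · simpa [SimpleGraph.Walk.length_cons] using h2

/-- Let G be a simple graph, s₀ and s₁ vertices in the same connected component, and
d, d̄ natural numbers. If every vertex v reachable from s₀ with dist(s₀,v) ≤ d satisfies
dist(s₁,v) > d̄, then dist(s₀,s₁) ≥ d + d̄ + 1. -/
theorem dist_lower_bound_of_layers_disjoint
    {V : Type*} (G : SimpleGraph V) (s0 s1 : V) (hconn : G.Reachable s0 s1)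
    (d dbar : ℕ)
    (h : ∀ v : V, G.Reachable s0 v → G.dist s0 v ≤ d → dbar < G.dist s1 v) :
    d + dbar + 1 ≤ G.dist s0 s1 := by
  by_contra hlt
  push_neg at hlt
  obtain ⟨p, hp⟩ := hconn.exists_walk_length_eq_dist
  set D := G.dist s0 s1 with hD
  have hDle : D ≤ d + dbar := by omega
  obtain ⟨v, hrv, h1, h2⟩ := walk_split_aux p (min d D) (by omega)
  have hds0 : G.dist s0 v ≤ d := h1.trans (min_le_left _ _)
  have hvs1 : G.dist v s1 ≤ dbar := by
    have := h2
    rw [hp] at this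
    omega
  have := h v hrv hds0
  rw [SimpleGraph.dist_comm] at this
  omega
end
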